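/- Let E be a real vector space and A ⊆ E star-shaped with convex complement Aᶜ. Then the Minkowski gauge of A is superadditive on the conic hull of Aᶜ: for all x, y ∈ cone(Aᶜ) = {λ • z : λ ≥ 0, z ∈ Aᶜ} ∪ {0}, one has 𝒟_A(x + y) ≥ 𝒟_A(x) + 𝒟_A(y) (in [0,∞]). -/

import Mathlib

open ENNReal

/-- The Minkowski gauge of a set `A` in a real vector space, with values in `[0,∞]`
(the infimum of the empty set being `∞`). -/
noncomputable def mgauge {E : Type*} [AddCommGroup E] [Module ℝ E] (A : Set E) (x : E) : ℝ≥0∞ :=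
  sInf {r : ℝ≥0∞ | ∃ m : ℝ, 0 < m ∧ m⁻¹ • x ∈ A ∧ r = ENNReal.ofReal m}

/-- The conic hull of a set `S`: `{λ • z : λ ≥ 0, z ∈ S} ∪ {0}`. -/
def conicHull {E : Type*} [AddCommGroup E] [Module ℝ E] (S : Set E) : Set E :=
  {y : E | ∃ l : ℝ, 0 ≤ l ∧ ∃ z ∈ S, y = l • z} ∪ {0}

/-!
Suppose `𝒟(x + y) < 𝒟(x) + 𝒟(y)`. When both gauges are positive we can pick reals `a, b > 0`
with `a < 𝒟(x)`, `b < 𝒟(y)` and `𝒟(x + y) < a + b`; then `x / a` and `y / b` lie outside `A`,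
so by convexity of `Aᶜ` so does their convex combination `(x + y) / (a + b)`. Since `A` is
star-shaped, this forces `𝒟(x + y) ≥ a + b`, a contradiction. On the conic hull of `Aᶜ` the
gauge vanishes only at `0` (if `A` is empty, every gauge is `∞`), and the zero cases are trivial.
-/

section

variable {E : Type*} [AddCommGroup E] [Module ℝ E] {A : Set E} {x y : E}

lemma StarConvex.inv_smul_mem_of_le (hA : StarConvex ℝ 0 A) {m m' : ℝ} (hm : 0 < m)
    (hmm' : m ≤ m') (h : m⁻¹ • x ∈ A) : m'⁻¹ • x ∈ A := by
  have hm' : 0 < m' := hm.trans_le hmm'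
  have := hA.smul_mem h (t := m / m') (by positivity) ((div_le_one hm').2 hmm')
  rwa [smul_smul, show m / m' * m⁻¹ = m'⁻¹ by field_simp] at this

lemma mgauge_le_ofReal {m : ℝ} (hm : 0 < m) (h : m⁻¹ • x ∈ A) :
    mgauge A x ≤ ENNReal.ofReal m :=
  sInf_le ⟨m, hm, h, rfl⟩

lemma inv_smul_notMem_of_ofReal_lt_mgauge {a : ℝ} (ha : 0 < a)
    (h : ENNReal.ofReal a < mgauge A x) : a⁻¹ • x ∉ A :=
  fun hmem => (mgauge_le_ofReal ha hmem).not_gt h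

lemma StarConvex.ofReal_le_mgauge (hA : StarConvex ℝ 0 A) {c : ℝ}
    (h : c⁻¹ • x ∉ A) : ENNReal.ofReal c ≤ mgauge A x := by
  refine le_sInf ?_
  rintro _ ⟨m, hm, hmem, rfl⟩
  rw [ENNReal.ofReal_le_ofReal_iff hm.le]
  by_contra! hmc
  exact h (hA.inv_smul_mem_of_le hm hmc.le hmem)

lemma Convex.inv_smul_add_mem {S : Set E} (hS : Convex ℝ S) {a b : ℝ} (ha : 0 < a) (hb : 0 < b)
    (hx : a⁻¹ • x ∈ S) (hy : b⁻¹ • y ∈ S) : (a + b)⁻¹ • (x + y) ∈ S := by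
  have := hS hx hy (a := a / (a + b)) (b := b / (a + b)) (by positivity) (by positivity)
    (by field_simp)
  rwa [smul_smul, smul_smul, show a / (a + b) * a⁻¹ = (a + b)⁻¹ by field_simp,
    show b / (a + b) * b⁻¹ = (a + b)⁻¹ by field_simp, ← smul_add] at this

lemma mgauge_zero_of_zero_mem (h0 : (0 : E) ∈ A) : mgauge A 0 = 0 := by
  refine le_antisymm (ENNReal.le_of_forall_pos_le_add fun ε hε _ => ?_) bot_le
  rw [zero_add, ← ENNReal.ofReal_coe_nnreal]
  exact mgauge_le_ofReal (NNReal.coe_pos.2 hε) (by rwa [smul_zero])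

lemma mgauge_empty (x : E) : mgauge ∅ x = ⊤ := by
  simp [mgauge]

lemma StarConvex.pos_mgauge_of_mem_conicHull (hA : StarConvex ℝ 0 A)
    (hx : x ∈ conicHull Aᶜ) (hx0 : x ≠ 0) : 0 < mgauge A x := by
  obtain ⟨l, hl0, z, hz, rfl⟩ : ∃ l : ℝ, 0 ≤ l ∧ ∃ z ∈ Aᶜ, x = l • z := by
    simpa [conicHull, hx0] using hx
  have hl : 0 < l := hl0.lt_of_ne (by rintro rfl; simp at hx0)
  refine (ENNReal.ofReal_pos.2 hl).trans_le (hA.ofReal_le_mgauge ?_)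
  rwa [inv_smul_smul₀ hl.ne']

lemma StarConvex.mgauge_add_le_mgauge_add (hA : StarConvex ℝ 0 A) (hconv : Convex ℝ Aᶜ)
    (hx : 0 < mgauge A x) (hy : 0 < mgauge A y) :
    mgauge A x + mgauge A y ≤ mgauge A (x + y) := by
  by_contra! h
  obtain ⟨p, hpx, q, hqy, hpq⟩ := ENNReal.exists_lt_add_of_lt_add h hx.ne' hy.ne'
  obtain ⟨a, -, hpa, hax⟩ := ENNReal.lt_iff_exists_real_btwn.1 hpx
  obtain ⟨b, -, hqb, hby⟩ := ENNReal.lt_iff_exists_real_btwn.1 hqy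
  have ha : 0 < a := ENNReal.ofReal_pos.1 (bot_le.trans_lt hpa)
  have hb : 0 < b := ENNReal.ofReal_pos.1 (bot_le.trans_lt hqb)
  have hxy : (a + b)⁻¹ • (x + y) ∉ A :=
    hconv.inv_smul_add_mem ha hb (inv_smul_notMem_of_ofReal_lt_mgauge ha hax)
      (inv_smul_notMem_of_ofReal_lt_mgauge hb hby)
  have := hA.ofReal_le_mgauge hxy
  rw [ENNReal.ofReal_add ha.le hb.le] at this
  exact (hpq.trans_le (add_le_add hpa.le hqb.le)).not_ge this

end

theorem stmt_12 {E : Type*} [AddCommGroup E] [Module ℝ E] (A : Set E)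
    (hstar : ∀ x ∈ A, ∀ l ∈ Set.Icc (0 : ℝ) 1, l • x ∈ A)
    (hconv : Convex ℝ Aᶜ)
    (x y : E) (hx : x ∈ conicHull Aᶜ) (hy : y ∈ conicHull Aᶜ) :
    mgauge A x + mgauge A y ≤ mgauge A (x + y) := by
  have hA : StarConvex ℝ 0 A :=
    starConvex_zero_iff.2 fun z hz l hl0 hl1 => hstar z hz l ⟨hl0, hl1⟩
  rcases A.eq_empty_or_nonempty with rfl | hne
  · simp [mgauge_empty]
  have h0 := mgauge_zero_of_zero_mem (hA.mem hne)
  rcases eq_or_ne x 0 with rfl | hx0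
  · simp [h0]
  rcases eq_or_ne y 0 with rfl | hy0
  · simp [h0]
  exact hA.mgauge_add_le_mgauge_add hconv (hA.pos_mgauge_of_mem_conicHull hx hx0)
    (hA.pos_mgauge_of_mem_conicHull hy hy0)
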